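/- arXiv:2603.12283 — 4 statements merged into one kernel-verified Lean document; each statement's English description precedes it below -/
import Mathlib

section
/- The self-cycle composition of a completely positive map is completely positive: if M_{AB|CD}: L(H_C ⊗ H_D) → L(H_A ⊗ H_B) is completely positive and H_A ≅ H_C, then ⨆_{A,C}(M_{AB|CD}): L(H_D) → L(H_B) is completely positive. -/
open scoped BigOperators Matrix Kronecker ComplexOrder
open Matrix

noncomputable section

/-- Superoperators between matrix algebras. -/
abbrev SupOp (a b : ℕ) := Matrix (Fin a) (Fin a) ℂ →ₗ[ℂ] Matrix (Fin b) (Fin b) ℂ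

/-- The Choi–Jamiołkowski operator of a superoperator,
`CJ(E) = (E ⊗ I)(|Φ⁺⟩⟨Φ⁺|)` with the normalised maximally entangled state. -/
def CJ {a b : ℕ} (E : SupOp a b) : Matrix (Fin a × Fin b) (Fin a × Fin b) ℂ :=
  Matrix.of fun p q => ((a : ℂ))⁻¹ * E (Matrix.single p.1 q.1 1) p.2 q.2

/-- The inverse Choi–Jamiołkowski map,
`CJ⁻¹(M)(ρ) = d_A Tr_{A'}(T_{A'|A}(ρ) M)` with `T_{A'|A}(ρ) = Σ_{i,j} |i⟩⟨j| ⟨j|ρ|i⟩`. -/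
def CJinv {a b : ℕ} (M : Matrix (Fin a × Fin b) (Fin a × Fin b) ℂ)
    (ρ : Matrix (Fin a) (Fin a) ℂ) : Matrix (Fin b) (Fin b) ℂ :=
  Matrix.of fun k l => (a : ℂ) * ∑ i, ∑ j, ρ j i * M (j, k) (i, l)

/-- Complete positivity: every identity-amplification maps positive semidefinite
matrices to positive semidefinite matrices. -/
def IsCPfun {ι κ : Type*} [Fintype ι] [DecidableEq ι] [Fintype κ] [DecidableEq κ]
    (E : Matrix ι ι ℂ → Matrix κ κ ℂ) : Prop :=
  ∀ n : ℕ, ∀ X : Matrix (ι × Fin n) (ι × Fin n) ℂ, X.PosSemidef →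
    (Matrix.of fun p q => E (Matrix.of fun i j => X (i, p.2) (j, q.2)) p.1 q.1 :
      Matrix (κ × Fin n) (κ × Fin n) ℂ).PosSemidef

/-- Trace preservation. -/
def IsTPfun {ι κ : Type*} [Fintype ι] [Fintype κ]
    (E : Matrix ι ι ℂ → Matrix κ κ ℂ) : Prop :=
  ∀ ρ, (E ρ).trace = ρ.trace

/-- The self-cycle composition over the (last) ancilla system `A` (of dimension `a`):
`⨆_A(E)(ρ) = Σ_{k,l} ⟨k|_A E(ρ ⊗ |k⟩⟨l|_A)|l⟩_A`. -/
def selfCycleA {σ τ : Type*} [Fintype σ] [DecidableEq σ] [Fintype τ] [DecidableEq τ] {a : ℕ}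
    (E : Matrix (σ × Fin a) (σ × Fin a) ℂ → Matrix (τ × Fin a) (τ × Fin a) ℂ)
    (ρ : Matrix σ σ ℂ) : Matrix τ τ ℂ :=
  Matrix.of fun s t => ∑ k, ∑ l,
    E (Matrix.of fun i j => ρ i.1 j.1 * (if i.2 = k ∧ j.2 = l then 1 else 0)) (s, k) (t, l)

/-- The full (scalar) self-cycle of a map with isomorphic input and output:
`⨆(M) = Σ_{j,k} ⟨j| M(|j⟩⟨k|) |k⟩`. -/
def fullSC {σ : Type*} [Fintype σ] [DecidableEq σ]
    (E : Matrix σ σ ℂ → Matrix σ σ ℂ) : ℂ :=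
  ∑ j, ∑ k, E (Matrix.single j k 1) j k

/-- The un-normalised maximally entangled vector `|Ω⁺⟩ = Σ_i |i⟩|i⟩`. -/
def omegaKet (d : ℕ) : Fin d × Fin d → ℂ := fun p => if p.1 = p.2 then 1 else 0

/-! The amplified map `⨆_{A,C}(M) ⊗ id_n` sends `X` to the compression, by `⟨Ω⁺|_{AA'}`, of
`(M ⊗ id_{A'n})(|Ω⁺⟩⟨Ω⁺|_{CA'} ⊗ X)`, where `A'` is a copy of `A` added to the ancilla. Tensoring
with the positive matrix `|Ω⁺⟩⟨Ω⁺|`, applying a completely positive map and compressing all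
preserve positivity. -/

variable {ι κ α μ ν : Type*}

theorem IsCPfun.posSemidef_amplify [Fintype ι] [DecidableEq ι] [Fintype κ] [DecidableEq κ]
    [Fintype ν] {E : Matrix ι ι ℂ → Matrix κ κ ℂ} (hE : IsCPfun E)
    {X : Matrix (ι × ν) (ι × ν) ℂ} (hX : X.PosSemidef) :
    (Matrix.of fun p q => E (Matrix.of fun i j => X (i, p.2) (j, q.2)) p.1 q.1 :
      Matrix (κ × ν) (κ × ν) ℂ).PosSemidef := by
  let e := Fintype.equivFin ν
  have hX' := hE _ _ (hX.submatrix (Prod.map id e.symm))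
  convert hX'.submatrix (Prod.map id e) using 1
  ext p q
  simp

theorem Matrix.PosSemidef.maxEntangled_kronecker [Fintype α] [DecidableEq α] [Fintype μ] [Fintype ν]
    {X : Matrix (μ × ν) (μ × ν) ℂ} (hX : X.PosSemidef) :
    (Matrix.of fun P Q => (if P.1.1 = P.2.1 then 1 else 0) * (if Q.1.1 = Q.2.1 then 1 else 0) *
      X (P.1.2, P.2.2) (Q.1.2, Q.2.2) :
      Matrix ((α × μ) × (α × ν)) ((α × μ) × (α × ν)) ℂ).PosSemidef := by
  have hΩ := posSemidef_vecMulVec_self_star fun p : α × α => if p.1 = p.2 then (1 : ℂ) else 0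
  have h : (_ : Matrix ((α × μ) × (α × ν)) ((α × μ) × (α × ν)) ℂ).PosSemidef :=
    (hΩ.kronecker hX).submatrix (Equiv.prodProdProdComm α μ α ν)
  convert h using 1
  ext P Q
  simp [vecMulVec_apply]

theorem Matrix.PosSemidef.sum_blocks [Fintype α] [Fintype κ]
    {Z : Matrix (α × κ) (α × κ) ℂ} (hZ : Z.PosSemidef) :
    (Matrix.of fun P Q => ∑ k, ∑ l, Z (k, P) (l, Q) : Matrix κ κ ℂ).PosSemidef := by
  classical
  let B : Matrix (α × κ) κ ℂ := Matrix.of fun R P => if R.2 = P then 1 else 0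
  convert hZ.conjTranspose_mul_mul_same B using 1
  ext P Q
  simpa [B, mul_apply, Fintype.sum_prod_type] using Finset.sum_comm

/-- the self-cycle composition `⨆_{A,C}` (looping the first factor `A ≅ C`
of dimension `a`) of a completely positive map is completely positive. -/
theorem stmt3 (a b d : ℕ)
    (M : Matrix (Fin a × Fin d) (Fin a × Fin d) ℂ →ₗ[ℂ]
         Matrix (Fin a × Fin b) (Fin a × Fin b) ℂ)
    (hM : IsCPfun ⇑M) :
    IsCPfun (fun ρ : Matrix (Fin d) (Fin d) ℂ =>
      (Matrix.of fun s t => ∑ k, ∑ l,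
        M (Matrix.of fun i j =>
            (if i.1 = k then 1 else 0) * (if j.1 = l then 1 else 0) * ρ i.2 j.2)
          (k, s) (l, t) : Matrix (Fin b) (Fin b) ℂ)) := by
  intro n X hX
  have hY := hM.posSemidef_amplify (hX.maxEntangled_kronecker (α := Fin a))
  exact (hY.submatrix fun P : Fin a × (Fin b × Fin n) => ((P.1, P.2.1), (P.1, P.2.2))).sum_blocks
end
end

section
/- For any nonzero linear operator Ĉ: H_{S₁} → H_{S₂} between finite-dimensional Hilbert spaces with dim H_{S₁} ≤ dim H_{S₂}, there exists an ancilla Hilbert space H_A ≅ H_{S₁} ⊗ ℂ², an isometry V: H_{S₁} ⊗ H_A → H_{S₂} ⊗ H_A, and a real constant α > 0 such that Ĉ = α ⟨Ω⁺|_{AA'} V |Ω⁺⟩_{AA'}, where |Ω⁺⟩_{AA'} = Σ_k |k⟩_A |k⟩_{A'} is the un-normalised maximally entangled state on two copies of H_A and the partial inner product loops the ancilla. -/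
open scoped BigOperators Matrix Kronecker ComplexOrder
open Matrix

noncomputable section

/-!
Take `V` block diagonal in the ancilla index `k = (q, t)`, with isometric blocks `W (q, t)`;
then `Σ_k V (m, k) (i, k) = Σ_k W k m i`, so it suffices to write a positive multiple of `Ĉ`
as a sum of `2 d₁` isometries `ℂ^{d₁} → ℂ^{d₂}`. Rescale `Ĉ` so that its columns `z_q` have
norm at most `1`. The rank-one matrix with single column `2 z_q` (in position `q`) is the sum of
the two isometries with columns `e^{±iθᵢ} vᵢ`, where `v` is an orthonormal `d₁`-frame in
`ℂ^{d₂}` with `v_q = z_q / ‖z_q‖` (this is where `d₁ ≤ d₂` enters), `θ_q = arccos ‖z_q‖` and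
`θᵢ = π / 2` for `i ≠ q`.
-/

open ComplexConjugate

section
variable {𝕜 E ι : Type*} [RCLike 𝕜] [NormedAddCommGroup E] [InnerProductSpace 𝕜 E]

theorem Orthonormal.smul_of_norm_eq_one {v : ι → E} (hv : Orthonormal 𝕜 v) {μ : ι → 𝕜}
    (hμ : ∀ i, ‖μ i‖ = 1) : Orthonormal 𝕜 fun i => μ i • v i :=
  ⟨fun i => by rw [norm_smul, hμ, one_mul, hv.1],
    fun i j hij => by
      dsimp only
      rw [inner_smul_left, inner_smul_right, hv.2 hij, mul_zero, mul_zero]⟩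

theorem exists_orthonormal_apply_eq [FiniteDimensional 𝕜 E] [Fintype ι]
    (hcard : Fintype.card ι ≤ Module.finrank 𝕜 E) (i₀ : ι) {u : E} (hu : ‖u‖ = 1) :
    ∃ v : ι → E, Orthonormal 𝕜 v ∧ v i₀ = u := by
  obtain ⟨e⟩ : Nonempty (ι ↪ Fin (Module.finrank 𝕜 E)) :=
    Function.Embedding.nonempty_of_card_le (by simpa using hcard)
  have hu' : Orthonormal 𝕜 (({e i₀} : Set _).domRestrict fun _ => u) :=
    orthonormal_subsingleton_iff.mpr fun _ => hu
  obtain ⟨b, hb⟩ := hu'.exists_orthonormalBasis_extension_of_card_eq (by simp)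
  exact ⟨b ∘ e, b.orthonormal.comp e e.injective, hb _ rfl⟩

end

theorem Orthonormal.conjTranspose_mul_self_eq_one {𝕜 ι κ : Type*} [RCLike 𝕜] [Fintype κ]
    [DecidableEq ι] {w : ι → EuclideanSpace 𝕜 κ} (hw : Orthonormal 𝕜 w) :
    (of fun k i => w i k)ᴴ * of (fun k i => w i k) = 1 := by
  rw [← gram_eq_one_iff_orthonormal.mpr hw,
    gram_eq_conjTranspose_mul (EuclideanSpace.basisFun κ 𝕜)]
  rfl

theorem exists_isometry_pair_add_eq_of_norm_le_one {ι κ : Type*} [Fintype ι] [DecidableEq ι]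
    [Fintype κ] (hcard : Fintype.card ι ≤ Fintype.card κ) (q : ι) (z : EuclideanSpace ℂ κ)
    (hz : ‖z‖ ≤ 1) :
    ∃ W : Fin 2 → Matrix κ ι ℂ, (∀ t, (W t)ᴴ * W t = 1) ∧
      ∀ k i, W 0 k i + W 1 k i = if i = q then 2 * z k else 0 := by
  have : Nonempty κ := Fintype.card_pos_iff.mp ((Fintype.card_pos_iff.mpr ⟨q⟩).trans_le hcard)
  obtain ⟨u, hu, hzu⟩ : ∃ u : EuclideanSpace ℂ κ, ‖u‖ = 1 ∧ (‖z‖ : ℂ) • u = z := by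
    by_cases hz0 : z = 0
    · obtain ⟨u, hu⟩ := exists_norm_eq (EuclideanSpace ℂ κ) zero_le_one
      exact ⟨u, hu, by simp [hz0]⟩
    · exact ⟨(‖z‖⁻¹ : ℂ) • z, norm_smul_inv_norm hz0, by
        rw [smul_smul, mul_inv_cancel₀ (by simpa using hz0), one_smul]⟩
  obtain ⟨v, hv, hvq⟩ := exists_orthonormal_apply_eq (𝕜 := ℂ) (by simpa using hcard) q hu
  set θ : ι → ℝ := fun i => if i = q then Real.arccos ‖z‖ else Real.pi / 2
  set μ : ι → ℂ := fun i => Complex.exp (θ i * Complex.I)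
  have hμ : ∀ i, ‖μ i‖ = 1 := fun i => Complex.norm_exp_ofReal_mul_I _
  have hμ_add : ∀ i, μ i + conj (μ i) = 2 * (Real.cos (θ i) : ℂ) := fun i => by
    rw [Complex.add_conj, Complex.exp_ofReal_mul_I_re, Complex.ofReal_mul, Complex.ofReal_ofNat]
  refine ⟨![of fun k i => μ i * v i k, of fun k i => conj (μ i) * v i k], ?_, ?_⟩
  · intro t
    fin_cases t
    · exact (hv.smul_of_norm_eq_one hμ).conjTranspose_mul_self_eq_one
    · exact (hv.smul_of_norm_eq_one fun i =>
        (RCLike.norm_conj _).trans (hμ i)).conjTranspose_mul_self_eq_one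
  · intro k i
    simp only [Matrix.cons_val_zero, Matrix.cons_val_one, of_apply, ← add_mul, hμ_add]
    split_ifs with hi
    · subst hi
      conv_rhs => rw [← hzu]
      simp [θ, hvq, Real.cos_arccos (by linarith [norm_nonneg z]) hz, mul_assoc]
    · simp [θ, hi]

theorem exists_eq_pos_smul_sum_isometries {ι κ : Type*} [Fintype ι] [DecidableEq ι] [Fintype κ]
    (hcard : Fintype.card ι ≤ Fintype.card κ) (C : Matrix κ ι ℂ) :
    ∃ (α : ℝ) (W : ι × Fin 2 → Matrix κ ι ℂ), 0 < α ∧ (∀ p, (W p)ᴴ * W p = 1) ∧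
      C = (α : ℂ) • ∑ p, W p := by
  set col : ι → EuclideanSpace ℂ κ := fun q => WithLp.toLp 2 fun k => C k q
  set s : ℝ := 1 + ∑ q, ‖col q‖
  have hs : 0 < s := by positivity
  have hcol : ∀ q, ‖(s⁻¹ : ℂ) • col q‖ ≤ 1 := fun q => by
    have : ‖col q‖ ≤ s :=
      (Finset.single_le_sum (fun q _ => norm_nonneg (col q)) (Finset.mem_univ q)).trans
        (le_add_of_nonneg_left zero_le_one)
    rw [norm_smul, norm_inv, Complex.norm_real, Real.norm_of_nonneg hs.le]
    exact inv_mul_le_one_of_le₀ this hs.le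
  choose W hW hW_add using fun q => exists_isometry_pair_add_eq_of_norm_le_one hcard q _ (hcol q)
  refine ⟨s / 2, fun p => W p.1 p.2, by positivity, fun p => hW _ _, ?_⟩
  ext k i
  have hs' : (s : ℂ) ≠ 0 := Complex.ofReal_ne_zero.mpr hs.ne'
  simp only [Matrix.smul_apply, Fintype.sum_prod_type, Fin.sum_univ_two, Matrix.sum_apply,
    Matrix.add_apply, hW_add, Finset.sum_ite_eq, Finset.mem_univ,
    if_true, PiLp.smul_apply, smul_eq_mul, col, Complex.ofReal_div, Complex.ofReal_ofNat]
  field_simp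

theorem stmt12_general (d1 d2 : ℕ) (hle : d1 ≤ d2)
    (Chat : Matrix (Fin d2) (Fin d1) ℂ) :
    ∃ (α : ℝ) (V : Matrix (Fin d2 × (Fin d1 × Fin 2)) (Fin d1 × (Fin d1 × Fin 2)) ℂ),
      0 < α ∧ Vᴴ * V = 1 ∧
      ∀ m i, Chat m i = (α : ℂ) * ∑ k, V (m, k) (i, k) := by
  obtain ⟨α, W, hα, hW, hC⟩ := exists_eq_pos_smul_sum_isometries (by simpa using hle) Chat
  refine ⟨α, blockDiagonal W, hα, ?_, fun m i => ?_⟩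
  · rw [blockDiagonal_conjTranspose, ← blockDiagonal_mul]
    simp only [hW]
    exact blockDiagonal_one
  · rw [hC]
    simp only [Matrix.smul_apply, Matrix.sum_apply, blockDiagonal_apply_eq, smul_eq_mul]

/-- any nonzero operator `Ĉ : H_{S₁} → H_{S₂}` (with `d₁ ≤ d₂`) arises,
up to a positive constant `α`, from looping the ancilla `A ≅ H_{S₁} ⊗ ℂ²` of an
isometry `V : H_{S₁} ⊗ H_A → H_{S₂} ⊗ H_A`:
`Ĉ = α ⟨Ω⁺|_{AA'} V |Ω⁺⟩_{AA'} = α Σ_k ⟨k|_A V |k⟩_A`. -/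
theorem stmt12 (d1 d2 : ℕ) (hle : d1 ≤ d2)
    (Chat : Matrix (Fin d2) (Fin d1) ℂ) (h : Chat ≠ 0) :
    ∃ (α : ℝ) (V : Matrix (Fin d2 × (Fin d1 × Fin 2)) (Fin d1 × (Fin d1 × Fin 2)) ℂ),
      0 < α ∧ Vᴴ * V = 1 ∧
      ∀ m i, Chat m i = (α : ℂ) * ∑ k, V (m, k) (i, k) :=
  stmt12_general d1 d2 hle Chat
end
end

section
/- Let P ∈ L(H_{S₁} ⊗ H_{S₂}) be a density operator (positive, trace one). Then there exist a finite-dimensional ancilla H_A with dim H_A = 2·dim H_{S₁}, a CPTP map E: L(H_{S₁} ⊗ H_A) → L(H_{S₂} ⊗ H_A), and a real constant α > 0 such that CJ⁻¹_{S₂|S₁}(P) = α · ⨆_A(E), where ⨆_A denotes the self-cycle composition over the ancilla A. -/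
open scoped BigOperators Matrix Kronecker ComplexOrder
open Matrix

noncomputable section

/-!
Factor `P = B Bᴴ`. The slices `A_m = (B_{(i,s),m})_{s,i}` are Kraus operators of `CJ⁻¹(P) / d₁`,
and `∑ A_mᴴ A_m` is positive with trace `tr P = 1`, hence `≤ 1`. This trace-non-increasing family
is completed to a trace-preserving one on the ancilla `A = ℂ² ⊗ ℂ^{d₁}`: the operators
`A_m ⊗ |0⟩⟨0| ⊗ 1` carry the map, a square root `F` of the defect `1 - ∑ A_mᴴ A_m` is routed
through `|1⟩⟨0| ⊗ 1`, and the flag `|1⟩` is sent back through `|0⟩⟨1| ⊗ 1` to a fixed output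
state. A Kraus operator `X ⊗ Y` contributes `|tr Y|² X ρ Xᴴ` to the self-cycle over `A`, so only
the first family survives, with weight `d₁²`, giving `d₁ · CJ⁻¹(P)(ρ)`.
-/

namespace Matrix

lemma PosSemidef.posSemidef_trace_smul_one_sub {𝕜 n : Type*} [RCLike 𝕜] [Fintype n]
    [DecidableEq n] {A : Matrix n n 𝕜} (hA : A.PosSemidef) : (A.trace • 1 - A).PosSemidef := by
  set ev := hA.1.eigenvalues
  have hconj : A.trace • 1 - A = Unitary.conjStarAlgAut 𝕜 _ hA.1.eigenvectorUnitary
      (diagonal fun i => A.trace - (ev i : 𝕜)) := by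
    have hdiag : diagonal (fun i => A.trace - (ev i : 𝕜)) =
        A.trace • 1 - diagonal (RCLike.ofReal ∘ ev) := by
      ext i j
      rcases eq_or_ne i j with rfl | hij <;> simp [*]
    rw [hdiag, map_sub, map_smul, map_one, ← hA.1.spectral_theorem]
  rw [hconj, Unitary.conjStarAlgAut_apply]
  refine PosSemidef.mul_mul_conjTranspose_same (PosSemidef.diagonal fun i => ?_) _
  rw [hA.1.trace_eq_sum_eigenvalues, ← RCLike.ofReal_sum, ← RCLike.ofReal_sub, Pi.zero_apply,
    RCLike.ofReal_nonneg, sub_nonneg]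
  exact Finset.single_le_sum (fun j _ => hA.eigenvalues_nonneg j) (Finset.mem_univ i)

lemma PosSemidef.exists_eq_mul_conjTranspose {𝕜 n : Type*} [RCLike 𝕜] [Fintype n]
    [DecidableEq n] {P : Matrix n n 𝕜} (hP : P.PosSemidef) : ∃ B : Matrix n n 𝕜, P = B * Bᴴ := by
  open scoped MatrixOrder in
  obtain ⟨C, hC⟩ := CStarAlgebra.nonneg_iff_eq_star_mul_self.mp hP.nonneg
  exact ⟨Cᴴ, by rw [hC, conjTranspose_conjTranspose, star_eq_conjTranspose]⟩

lemma sum_kronecker {α l m n p T : Type*} [NonUnitalNonAssocSemiring α] [Fintype T]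
    (M : T → Matrix l m α) (N : Matrix n p α) : (∑ t, M t) ⊗ₖ N = ∑ t, M t ⊗ₖ N := by
  ext
  simp [Matrix.sum_apply, Finset.sum_mul]

lemma sum_conjTranspose_mul_self_single_mul {α ι κ μ : Type*} [Semiring α] [StarRing α]
    [Fintype ι] [Fintype κ] [DecidableEq ι] [DecidableEq κ] (z : κ) (F : Matrix ι μ α) :
    ∑ r : ι, ((single z r 1 : Matrix κ ι α) * F)ᴴ * ((single z r 1 : Matrix κ ι α) * F) =
      Fᴴ * F := by
  have hterm : ∀ r, ((single z r 1 : Matrix κ ι α) * F)ᴴ * ((single z r 1 : Matrix κ ι α) * F) =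
      Fᴴ * ((single r r 1 : Matrix ι ι α) * F) := fun r => by
    rw [conjTranspose_mul, conjTranspose_single, star_one, Matrix.mul_assoc]
    congr 1
    rw [← Matrix.mul_assoc, single_mul_single_same, mul_one]
  simp_rw [hterm]
  rw [← Matrix.mul_sum, ← Matrix.sum_mul, sum_single_one, Matrix.one_mul]

end Matrix

section Kraus

variable {ι κ T : Type*} [Fintype ι] [Fintype T]

def krausMap (K : T → Matrix κ ι ℂ) : Matrix ι ι ℂ →ₗ[ℂ] Matrix κ κ ℂ where
  toFun X := ∑ t, K t * X * (K t)ᴴ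
  map_add' X Y := by simp only [Matrix.mul_add, Matrix.add_mul, Finset.sum_add_distrib]
  map_smul' c X := by simp [Finset.smul_sum]

@[simp]
lemma krausMap_apply (K : T → Matrix κ ι ℂ) (X : Matrix ι ι ℂ) :
    krausMap K X = ∑ t, K t * X * (K t)ᴴ := rfl

lemma isCPfun_krausMap [DecidableEq ι] [Fintype κ] [DecidableEq κ] (K : T → Matrix κ ι ℂ) :
    IsCPfun (krausMap K) := by
  intro n X hX
  have hamp : (of fun p q => krausMap K (of fun i j => X (i, p.2) (j, q.2)) p.1 q.1 :
      Matrix (κ × Fin n) (κ × Fin n) ℂ) =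
        krausMap (fun t => K t ⊗ₖ (1 : Matrix (Fin n) (Fin n) ℂ)) X := by
    ext p q
    simp [Matrix.sum_apply, mul_apply, Fintype.sum_prod_type, one_apply, Finset.sum_mul,
      apply_ite (starRingEnd ℂ)]
  rw [hamp]
  exact posSemidef_sum _ fun t _ => hX.mul_mul_conjTranspose_same _

lemma isTPfun_krausMap [Fintype κ] [DecidableEq ι] {K : T → Matrix κ ι ℂ}
    (hK : ∑ t, (K t)ᴴ * K t = 1) : IsTPfun (krausMap K) := by
  intro X
  simp_rw [krausMap_apply, trace_sum, trace_mul_cycle (K _), ← trace_sum, ← Finset.sum_mul, hK,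
    Matrix.one_mul]

lemma selfCycleA_krausMap_kronecker [DecidableEq ι] [Fintype κ] [DecidableEq κ] {a : ℕ}
    (A : T → Matrix κ ι ℂ) (B : T → Matrix (Fin a) (Fin a) ℂ) (ρ : Matrix ι ι ℂ) :
    selfCycleA (krausMap fun t => A t ⊗ₖ B t) ρ =
      ∑ t, ((B t).trace * star (B t).trace) • (A t * ρ * (A t)ᴴ) := by
  have hinput : ∀ k l : Fin a, (of fun i j => ρ i.1 j.1 * (if i.2 = k ∧ j.2 = l then 1 else 0) :
      Matrix (ι × Fin a) (ι × Fin a) ℂ) = ρ ⊗ₖ single k l 1 := fun k l => by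
    ext i j
    simp [single_apply, eq_comm]
  ext s s'
  simp only [selfCycleA, hinput, krausMap_apply, conjTranspose_kronecker, ← mul_kronecker_mul]
  have hcorner : ∀ (M : Matrix (Fin a) (Fin a) ℂ) (k l : Fin a),
      (M * single k l (1 : ℂ) * Mᴴ : Matrix (Fin a) (Fin a) ℂ) k l = M k k * star (M l l) :=
    fun M k l => by simp [mul_apply, single_apply, ite_and]
  simp only [Matrix.sum_apply, kroneckerMap_apply, hcorner, Matrix.smul_apply, smul_eq_mul, trace,
    diag_apply, star_sum, of_apply]
  rw [Finset.sum_comm_cycle]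
  refine Finset.sum_congr rfl fun t _ => ?_
  rw [mul_comm, Finset.sum_mul_sum]
  simp only [Finset.mul_sum]

end Kraus

section Ancilla

variable (d : ℕ)

def ancillaOfQubit (b : Matrix (Fin 2) (Fin 2) ℂ) : Matrix (Fin (2 * d)) (Fin (2 * d)) ℂ :=
  (b ⊗ₖ (1 : Matrix (Fin d) (Fin d) ℂ)).submatrix finProdFinEquiv.symm finProdFinEquiv.symm

lemma conjTranspose_ancillaOfQubit_mul (b c : Matrix (Fin 2) (Fin 2) ℂ) :
    (ancillaOfQubit d b)ᴴ * ancillaOfQubit d c = ancillaOfQubit d (bᴴ * c) := by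
  rw [ancillaOfQubit, ancillaOfQubit, conjTranspose_submatrix, submatrix_mul_equiv,
    conjTranspose_kronecker, conjTranspose_one, ← mul_kronecker_mul, Matrix.one_mul, ancillaOfQubit]

lemma trace_ancillaOfQubit (b : Matrix (Fin 2) (Fin 2) ℂ) :
    (ancillaOfQubit d b).trace = d * b.trace := by
  have htrace_submatrix :
      (ancillaOfQubit d b).trace = (b ⊗ₖ (1 : Matrix (Fin d) (Fin d) ℂ)).trace :=
    Equiv.sum_comp finProdFinEquiv.symm fun i => (b ⊗ₖ (1 : Matrix (Fin d) (Fin d) ℂ)) i i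
  rw [htrace_submatrix, trace_kronecker, trace_one, Fintype.card_fin, mul_comm]

lemma ancillaOfQubit_add (b c : Matrix (Fin 2) (Fin 2) ℂ) :
    ancillaOfQubit d (b + c) = ancillaOfQubit d b + ancillaOfQubit d c := by
  rw [ancillaOfQubit, add_kronecker, submatrix_add]
  rfl

lemma ancillaOfQubit_one : ancillaOfQubit d 1 = 1 := by
  rw [ancillaOfQubit, one_kronecker_one, submatrix_one_equiv]

end Ancilla

section Dilation

variable {ι κ T : Type*} [Fintype ι] [DecidableEq ι] [Fintype κ] [DecidableEq κ] [Fintype T]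

def dilationSystemOps (z : κ) (A : T → Matrix κ ι ℂ) (F : Matrix ι ι ℂ) :
    T ⊕ ι ⊕ ι → Matrix κ ι ℂ :=
  Sum.elim A (Sum.elim (fun r => single z r (1 : ℂ) * F) (fun r => single z r 1))

def dilationQubitOps : T ⊕ ι ⊕ ι → Matrix (Fin 2) (Fin 2) ℂ :=
  Sum.elim (fun _ => single 0 0 1) (Sum.elim (fun _ => single 1 0 1) (fun _ => single 0 1 1))

def dilationKraus (z : κ) (A : T → Matrix κ ι ℂ) (F : Matrix ι ι ℂ) (d : ℕ) :
    T ⊕ ι ⊕ ι → Matrix (κ × Fin (2 * d)) (ι × Fin (2 * d)) ℂ :=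
  fun t => dilationSystemOps z A F t ⊗ₖ ancillaOfQubit d (dilationQubitOps t)

lemma sum_conjTranspose_dilationKraus_mul_self (z : κ) (A : T → Matrix κ ι ℂ) {F : Matrix ι ι ℂ}
    (hF : Fᴴ * F = 1 - ∑ t, (A t)ᴴ * A t) (d : ℕ) :
    ∑ t, (dilationKraus z A F d t)ᴴ * dilationKraus z A F d t = 1 := by
  have hqubit : (single 0 0 1 + single 1 1 1 : Matrix (Fin 2) (Fin 2) ℂ) = 1 := by
    ext i j
    fin_cases i <;> fin_cases j <;> simp
  simp only [dilationKraus, conjTranspose_kronecker, ← mul_kronecker_mul,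
    conjTranspose_ancillaOfQubit_mul, Fintype.sum_sum_type, dilationSystemOps, dilationQubitOps,
    Sum.elim_inl, Sum.elim_inr, conjTranspose_single, star_one, single_mul_single_same, mul_one,
    ← Matrix.sum_kronecker, sum_conjTranspose_mul_self_single_mul, sum_single_one, hF]
  rw [← add_assoc, ← add_kronecker, add_sub_cancel, ← kronecker_add, ← ancillaOfQubit_add, hqubit,
    ancillaOfQubit_one, one_kronecker_one]

lemma selfCycleA_krausMap_dilationKraus (z : κ) (A : T → Matrix κ ι ℂ) (F : Matrix ι ι ℂ)
    (d : ℕ) (ρ : Matrix ι ι ℂ) :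
    selfCycleA (krausMap (dilationKraus z A F d)) ρ = ((d : ℂ) ^ 2) • ∑ t, A t * ρ * (A t)ᴴ := by
  unfold dilationKraus
  rw [selfCycleA_krausMap_kronecker]
  simp [Fintype.sum_sum_type, trace_ancillaOfQubit, dilationSystemOps, dilationQubitOps,
    trace_single_eq_of_ne, Finset.smul_sum, sq]

end Dilation

theorem exists_isCPfun_isTPfun_selfCycleA_eq_smul {ι κ T : Type*} [Fintype ι] [DecidableEq ι]
    [Fintype κ] [DecidableEq κ] [Fintype T] (z : κ) (A : T → Matrix κ ι ℂ)
    (hA : (1 - ∑ t, (A t)ᴴ * A t).PosSemidef) (d : ℕ) :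
    ∃ E : Matrix (ι × Fin (2 * d)) (ι × Fin (2 * d)) ℂ →ₗ[ℂ]
        Matrix (κ × Fin (2 * d)) (κ × Fin (2 * d)) ℂ,
      IsCPfun E ∧ IsTPfun E ∧ ∀ ρ, selfCycleA E ρ = ((d : ℂ) ^ 2) • ∑ t, A t * ρ * (A t)ᴴ := by
  open scoped MatrixOrder in
  obtain ⟨F, hF⟩ := CStarAlgebra.nonneg_iff_eq_star_mul_self.mp hA.nonneg
  exact ⟨krausMap (dilationKraus z A F d), isCPfun_krausMap _,
    isTPfun_krausMap (sum_conjTranspose_dilationKraus_mul_self z A hF.symm d),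
    selfCycleA_krausMap_dilationKraus z A F d⟩

section ChoiSlice

variable {ι κ μ : Type*} [Fintype ι] [Fintype κ] [Fintype μ]

def choiSlice (B : Matrix (ι × κ) μ ℂ) (m : μ) : Matrix κ ι ℂ :=
  of fun s i => B (i, s) m

lemma trace_sum_conjTranspose_choiSlice_mul_self (B : Matrix (ι × κ) μ ℂ) :
    (∑ m, (choiSlice B m)ᴴ * choiSlice B m).trace = (B * Bᴴ).trace := by
  simp only [trace, diag_apply, choiSlice, mul_apply, Matrix.sum_apply, conjTranspose_apply,
    of_apply, Fintype.sum_prod_type]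
  refine Finset.sum_congr rfl fun i _ => ?_
  rw [Finset.sum_comm]
  simp only [mul_comm]

lemma CJinv_mul_conjTranspose {a b : ℕ} (B : Matrix (Fin a × Fin b) μ ℂ)
    (ρ : Matrix (Fin a) (Fin a) ℂ) :
    CJinv (B * Bᴴ) ρ = (a : ℂ) • ∑ m, choiSlice B m * ρ * (choiSlice B m)ᴴ := by
  ext k l
  simp only [CJinv, mul_apply, conjTranspose_apply, RCLike.star_def, Finset.mul_sum, of_apply,
    choiSlice, Matrix.smul_apply, Matrix.sum_apply, Finset.sum_mul, smul_eq_mul]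
  rw [Finset.sum_comm_cycle]
  refine Finset.sum_congr rfl fun m _ => Finset.sum_congr rfl fun j _ =>
    Finset.sum_congr rfl fun i _ => ?_
  ring

end ChoiSlice

/-- for any density operator `P` on `H_{S₁} ⊗ H_{S₂}`, there exist an
ancilla of dimension `2·d₁`, a CPTP map `E : L(H_{S₁} ⊗ H_A) → L(H_{S₂} ⊗ H_A)` and
a constant `α > 0` such that `CJ⁻¹_{S₂|S₁}(P) = α · ⨆_A(E)`. -/
theorem stmt13 (d1 d2 : ℕ)
    (P : Matrix (Fin d1 × Fin d2) (Fin d1 × Fin d2) ℂ)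
    (hP : P.PosSemidef) (htr : P.trace = 1) :
    ∃ (E : Matrix (Fin d1 × Fin (2 * d1)) (Fin d1 × Fin (2 * d1)) ℂ →ₗ[ℂ]
           Matrix (Fin d2 × Fin (2 * d1)) (Fin d2 × Fin (2 * d1)) ℂ) (α : ℝ),
      IsCPfun ⇑E ∧ IsTPfun ⇑E ∧ 0 < α ∧
      ∀ ρ, CJinv P ρ = (α : ℂ) • selfCycleA (⇑E) ρ := by
  obtain ⟨⟨i₀, z⟩⟩ : Nonempty (Fin d1 × Fin d2) := by
    by_contra hempty
    simp [trace, not_nonempty_iff.mp hempty] at htr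
  obtain ⟨B, rfl⟩ := hP.exists_eq_mul_conjTranspose
  set A := choiSlice B
  have hA : (1 - ∑ m, (A m)ᴴ * A m).PosSemidef := by
    have hQ := (posSemidef_sum Finset.univ fun m _ =>
      posSemidef_conjTranspose_mul_self (A m)).posSemidef_trace_smul_one_sub
    rwa [trace_sum_conjTranspose_choiSlice_mul_self, htr, one_smul] at hQ
  obtain ⟨E, hCP, hTP, hE⟩ := exists_isCPfun_isTPfun_selfCycleA_eq_smul z A hA d1
  refine ⟨E, (d1 : ℝ)⁻¹, hCP, hTP, inv_pos.mpr (Nat.cast_pos.mpr i₀.pos), fun ρ => ?_⟩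
  have hd1 : (d1 : ℂ) ≠ 0 := Nat.cast_ne_zero.mpr i₀.pos.ne'
  rw [CJinv_mul_conjTranspose, hE, smul_smul]
  congr 1
  push_cast
  field_simp
end
end

section
/- Let ρ_P be the Choi-type total state of a causal model: ρ_P = α · ⨆_{A_V}(Ē)(|Φ⁺⟩⟨Φ⁺|_{E_in E'_in}) for a CPTP map Ē: L(H_{E_in} ⊗ H_{A_V}) → L(H_{E_out} ⊗ H_{A_V}), a constant α > 0, and |L⟩ = Σ_i |i⟩_{E_out}|i⟩_{E'_in}. Then for any unitary U on a subsystem of E_out and operators O_y on a disjoint subsystem of E_out with Σ_y O_y† O_y = 𝟙, the normalised quantity M(U, O_y) = ⟨L|(U ⊗ O_y) ρ_P (U† ⊗ O_y†)|L⟩ / Σ_{y'} ⟨L|(U ⊗ O_{y'}) ρ_P (U† ⊗ O_{y'}†)|L⟩ equals ⨆[(𝒰 ⊗ 𝒪_y) ∘ Ē] / Σ_{y'} ⨆[(𝒰 ⊗ 𝒪_{y'}) ∘ Ē], independently of α, whenever the denominator is nonzero; here 𝒰(·) = U(·)U† and 𝒪_y(·) = O_y(·)O_y†. -/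
open scoped BigOperators Matrix Kronecker ComplexOrder
open Matrix

noncomputable section

section Stmt19

variable (na nb nr dA : ℕ)

/-- The edge system `E = (A × B) × R` of the causal model. -/
abbrev EIdx (na nb nr : ℕ) := (Fin na × Fin nb) × Fin nr

/-- The Choi-type total state
`ρ_P = α · (⨆_{A_V}(Ē) ⊗ I_{E'_in})(|Φ⁺⟩⟨Φ⁺|_{E_in E'_in})` on `E_out × E'_in`. -/
def rhoP (Ebar : Matrix (EIdx na nb nr × Fin dA) (EIdx na nb nr × Fin dA) ℂ →ₗ[ℂ]
      Matrix (EIdx na nb nr × Fin dA) (EIdx na nb nr × Fin dA) ℂ) (α : ℝ) :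
    Matrix (EIdx na nb nr × EIdx na nb nr) (EIdx na nb nr × EIdx na nb nr) ℂ :=
  Matrix.of fun p q =>
    (α : ℂ) * (((na * nb * nr : ℕ) : ℂ))⁻¹ *
      selfCycleA (⇑Ebar) (Matrix.single p.2 q.2 1) p.1 q.1

/-- `U ⊗ O_y ⊗ 𝟙_R ⊗ 𝟙_{E'_in}` acting on the `E_out` factor of the doubled space. -/
def Xop (U : Matrix (Fin na) (Fin na) ℂ) (O : Matrix (Fin nb) (Fin nb) ℂ) :
    Matrix (EIdx na nb nr × EIdx na nb nr) (EIdx na nb nr × EIdx na nb nr) ℂ :=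
  Matrix.of fun p q =>
    U p.1.1.1 q.1.1.1 * O p.1.1.2 q.1.1.2 * (if p.1.2 = q.1.2 then 1 else 0) *
      (if p.2 = q.2 then 1 else 0)

/-- `U ⊗ O_y ⊗ 𝟙_R ⊗ 𝟙_{A_V}` acting on the output of `Ē`. -/
def Wop (U : Matrix (Fin na) (Fin na) ℂ) (O : Matrix (Fin nb) (Fin nb) ℂ) :
    Matrix (EIdx na nb nr × Fin dA) (EIdx na nb nr × Fin dA) ℂ :=
  Matrix.of fun p q =>
    U p.1.1.1 q.1.1.1 * O p.1.1.2 q.1.1.2 * (if p.1.2 = q.1.2 then 1 else 0) *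
      (if p.2 = q.2 then 1 else 0)

/-- The link state `|L⟩ = Σ_i |i⟩_{E_out}|i⟩_{E'_in}`. -/
def linkL : EIdx na nb nr × EIdx na nb nr → ℂ := fun p => if p.1 = p.2 then 1 else 0

/-- The numerator `⟨L|(U ⊗ O_y) ρ_P (U† ⊗ O_y†)|L⟩`. -/
def numTN (Ebar : Matrix (EIdx na nb nr × Fin dA) (EIdx na nb nr × Fin dA) ℂ →ₗ[ℂ]
      Matrix (EIdx na nb nr × Fin dA) (EIdx na nb nr × Fin dA) ℂ) (α : ℝ)
    (U : Matrix (Fin na) (Fin na) ℂ) (O : Matrix (Fin nb) (Fin nb) ℂ) : ℂ :=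
  star (linkL na nb nr) ⬝ᵥ
    ((Xop na nb nr U O * rhoP na nb nr dA Ebar α * (Xop na nb nr U O)ᴴ).mulVec
      (linkL na nb nr))

/-- The full self-cycle `⨆[(𝒰 ⊗ 𝒪_y) ∘ Ē]` of the intervened causal model. -/
def scCM (Ebar : Matrix (EIdx na nb nr × Fin dA) (EIdx na nb nr × Fin dA) ℂ →ₗ[ℂ]
      Matrix (EIdx na nb nr × Fin dA) (EIdx na nb nr × Fin dA) ℂ)
    (U : Matrix (Fin na) (Fin na) ℂ) (O : Matrix (Fin nb) (Fin nb) ℂ) : ℂ :=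
  fullSC (fun X => Wop na nb nr dA U O * Ebar X * (Wop na nb nr dA U O)ᴴ)

/-!
Write `V = U ⊗ O_y ⊗ 𝟙_R` for the intervention on `E_out`. Contracting `ρ_P` with the link
state `|L⟩` identifies `E'_in` with `E_in`, so the numerator is `α / d_E` times
`Σ_{a,b} ⟨a| V ⨆_{A_V}(Ē)(|a⟩⟨b|) V† |b⟩`. Because `V ⊗ 𝟙_{A_V}` does not touch the ancilla, it
passes through the self-cycle over `A_V`, and the full self-cycle over `E × A_V` is the full
self-cycle over `E` of the one over `A_V`; hence the numerator is `α / d_E · ⨆[(𝒰 ⊗ 𝒪_y) ∘ Ē]`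
and the constant cancels in the ratio. When `d_E = 0` both sides are the junk value `0 / 0 = 0`.
-/

theorem Matrix.mul_mul_conjTranspose_apply {m n : Type*} [Fintype n] (A : Matrix m n ℂ)
    (M : Matrix n n ℂ) (i j : m) :
    (A * M * Aᴴ) i j = ∑ i', ∑ j', A i i' * M i' j' * star (A j j') := by
  simp only [mul_apply, conjTranspose_apply, Finset.sum_mul]
  exact Finset.sum_comm

theorem Matrix.kronecker_one_mul_mul_conjTranspose_apply {ι κ : Type*} [Fintype ι] [Fintype κ]
    [DecidableEq κ] (A : Matrix ι ι ℂ) (M : Matrix (ι × κ) (ι × κ) ℂ) (i j : ι) (k l : κ) :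
    ((A ⊗ₖ (1 : Matrix κ κ ℂ)) * M * (A ⊗ₖ (1 : Matrix κ κ ℂ))ᴴ) (i, k) (j, l) =
      (A * (of fun i' j' => M (i', k) (j', l)) * Aᴴ) i j := by
  simp only [mul_mul_conjTranspose_apply, Fintype.sum_prod_type, kronecker_apply, one_apply,
    of_apply, apply_ite (star : ℂ → ℂ), star_zero, mul_ite, ite_mul, mul_one, mul_zero, zero_mul,
    Finset.sum_ite_irrel, Finset.sum_const_zero, Finset.sum_ite_eq, Finset.mem_univ, if_true]

theorem selfCycleA_single_apply {σ τ : Type*} [Fintype σ] [DecidableEq σ] [Fintype τ]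
    [DecidableEq τ] {a : ℕ}
    (E : Matrix (σ × Fin a) (σ × Fin a) ℂ → Matrix (τ × Fin a) (τ × Fin a) ℂ)
    (i j : σ) (s t : τ) :
    selfCycleA E (single i j 1) s t = ∑ k, ∑ l, E (single (i, k) (j, l) 1) (s, k) (t, l) := by
  have h : ∀ k l, (of fun p q : σ × Fin a =>
      single i j (1 : ℂ) p.1 q.1 * (if p.2 = k ∧ q.2 = l then 1 else 0)) =
      single (i, k) (j, l) 1 := by
    intro k l
    ext ⟨p₁, p₂⟩ ⟨q₁, q₂⟩
    simp only [of_apply, single_apply, Prod.mk.injEq]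
    split_ifs <;> simp_all
  simp only [selfCycleA, of_apply, h]

theorem fullSC_eq_sum_selfCycleA {σ : Type*} [Fintype σ] [DecidableEq σ] {a : ℕ}
    (E : Matrix (σ × Fin a) (σ × Fin a) ℂ → Matrix (σ × Fin a) (σ × Fin a) ℂ) :
    fullSC E = ∑ i, ∑ j, selfCycleA E (single i j 1) i j := by
  simp only [fullSC, selfCycleA_single_apply, Fintype.sum_prod_type]
  exact Finset.sum_congr rfl fun i _ => Finset.sum_comm

theorem selfCycleA_eq_sum {σ τ : Type*} [Fintype σ] [DecidableEq σ] [Fintype τ] [DecidableEq τ]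
    {a : ℕ} (E : Matrix (σ × Fin a) (σ × Fin a) ℂ → Matrix (τ × Fin a) (τ × Fin a) ℂ)
    (ρ : Matrix σ σ ℂ) :
    selfCycleA E ρ = ∑ k, ∑ l, of fun s t =>
      E (of fun i j => ρ i.1 j.1 * (if i.2 = k ∧ j.2 = l then 1 else 0)) (s, k) (t, l) := by
  ext s t
  simp only [selfCycleA, of_apply, Matrix.sum_apply]

theorem selfCycleA_kronecker_one_conj {σ τ : Type*} [Fintype σ] [DecidableEq σ] [Fintype τ]
    [DecidableEq τ] {a : ℕ}
    (E : Matrix (σ × Fin a) (σ × Fin a) ℂ → Matrix (τ × Fin a) (τ × Fin a) ℂ)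
    (V : Matrix τ τ ℂ) (ρ : Matrix σ σ ℂ) :
    selfCycleA (fun X => (V ⊗ₖ (1 : Matrix (Fin a) (Fin a) ℂ)) * E X *
        (V ⊗ₖ (1 : Matrix (Fin a) (Fin a) ℂ))ᴴ) ρ = V * selfCycleA E ρ * Vᴴ := by
  ext s t
  simp only [selfCycleA_eq_sum, Matrix.mul_sum, Matrix.sum_mul, Matrix.sum_apply, of_apply,
    kronecker_one_mul_mul_conjTranspose_apply]

theorem star_diagKet_dotProduct_mulVec {ι : Type*} [Fintype ι] [DecidableEq ι]
    (M : Matrix (ι × ι) (ι × ι) ℂ) :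
    star (fun p : ι × ι => if p.1 = p.2 then (1 : ℂ) else 0 : ι × ι → ℂ) ⬝ᵥ
        (M *ᵥ fun p : ι × ι => if p.1 = p.2 then (1 : ℂ) else 0) =
      ∑ a, ∑ b, M (a, a) (b, b) := by
  simp only [dotProduct, mulVec, Pi.star_apply, apply_ite (star : ℂ → ℂ), star_one, star_zero,
    Fintype.sum_prod_type, ite_mul, mul_ite, one_mul, zero_mul, mul_one, mul_zero,
    Finset.sum_ite_eq, Finset.mem_univ, if_true]

def interventionOp (U : Matrix (Fin na) (Fin na) ℂ) (O : Matrix (Fin nb) (Fin nb) ℂ) :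
    Matrix (EIdx na nb nr) (EIdx na nb nr) ℂ :=
  (U ⊗ₖ O) ⊗ₖ (1 : Matrix (Fin nr) (Fin nr) ℂ)

theorem Xop_eq_kronecker (U : Matrix (Fin na) (Fin na) ℂ) (O : Matrix (Fin nb) (Fin nb) ℂ) :
    Xop na nb nr U O = interventionOp na nb nr U O ⊗ₖ (1 : Matrix (EIdx na nb nr) _ ℂ) := by
  ext ⟨⟨⟨i, j⟩, r⟩, e⟩ ⟨⟨⟨i', j'⟩, r'⟩, e'⟩
  simp only [Xop, interventionOp, of_apply, kronecker_apply, one_apply]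

theorem Wop_eq_kronecker (U : Matrix (Fin na) (Fin na) ℂ) (O : Matrix (Fin nb) (Fin nb) ℂ) :
    Wop na nb nr dA U O = interventionOp na nb nr U O ⊗ₖ (1 : Matrix (Fin dA) _ ℂ) := by
  ext ⟨⟨⟨i, j⟩, r⟩, e⟩ ⟨⟨⟨i', j'⟩, r'⟩, e'⟩
  simp only [Wop, interventionOp, of_apply, kronecker_apply, one_apply]

theorem rhoP_slice (Ebar : Matrix (EIdx na nb nr × Fin dA) (EIdx na nb nr × Fin dA) ℂ →ₗ[ℂ]
      Matrix (EIdx na nb nr × Fin dA) (EIdx na nb nr × Fin dA) ℂ) (α : ℝ) (a b : EIdx na nb nr) :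
    (of fun e f => rhoP na nb nr dA Ebar α (e, a) (f, b)) =
      ((α : ℂ) * ((na * nb * nr : ℕ) : ℂ)⁻¹) • selfCycleA (⇑Ebar) (single a b 1) := by
  ext e f
  simp only [rhoP, of_apply, Matrix.smul_apply, smul_eq_mul]

theorem numTN_eq_mul_scCM
    (Ebar : Matrix (EIdx na nb nr × Fin dA) (EIdx na nb nr × Fin dA) ℂ →ₗ[ℂ]
      Matrix (EIdx na nb nr × Fin dA) (EIdx na nb nr × Fin dA) ℂ) (α : ℝ)
    (U : Matrix (Fin na) (Fin na) ℂ) (O : Matrix (Fin nb) (Fin nb) ℂ) :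
    numTN na nb nr dA Ebar α U O =
      (α : ℂ) * ((na * nb * nr : ℕ) : ℂ)⁻¹ * scCM na nb nr dA Ebar U O := by
  unfold numTN linkL
  rw [star_diagKet_dotProduct_mulVec, scCM, fullSC_eq_sum_selfCycleA,
    Wop_eq_kronecker, Finset.mul_sum]
  simp only [Xop_eq_kronecker, kronecker_one_mul_mul_conjTranspose_apply, rhoP_slice,
    selfCycleA_kronecker_one_conj, Matrix.mul_smul, Matrix.smul_mul, Matrix.smul_apply,
    smul_eq_mul, Finset.mul_sum]

theorem stmt19 (Y : Type) [Fintype Y]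
    (Ebar : Matrix (EIdx na nb nr × Fin dA) (EIdx na nb nr × Fin dA) ℂ →ₗ[ℂ]
        Matrix (EIdx na nb nr × Fin dA) (EIdx na nb nr × Fin dA) ℂ)
    (α : ℝ) (hα : 0 < α)
    (U : Matrix (Fin na) (Fin na) ℂ)
    (O : Y → Matrix (Fin nb) (Fin nb) ℂ)
    (y : Y) :
    numTN na nb nr dA Ebar α U (O y) / (∑ y', numTN na nb nr dA Ebar α U (O y')) =
      scCM na nb nr dA Ebar U (O y) / (∑ y', scCM na nb nr dA Ebar U (O y')) := by
  simp only [numTN_eq_mul_scCM, ← Finset.mul_sum]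
  obtain hE | hE := isEmpty_or_nonempty (EIdx na nb nr)
  · simp [scCM, fullSC]
  · have hdim : ((na * nb * nr : ℕ) : ℂ) ≠ 0 := by
      simpa [Fintype.card_prod] using Fintype.card_ne_zero (α := EIdx na nb nr)
    exact mul_div_mul_left _ _ (mul_ne_zero (by exact_mod_cast hα.ne') (inv_ne_zero hdim))

end Stmt19
end
end
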